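/- Let d ≥ 1 and ε > 0. The regularization ρ_ε : ℝ^d → ℝ is differentiable at every point, and its gradient α_ε(z) = ∇ρ_ε(z) satisfies ⟨α_ε(z), z⟩ ≥ 0 for every z ∈ ℝ^d. -/

import Mathlib

/-!
`ρ_ε` is the radial function `z ↦ g ‖z‖` for a `C¹` profile `g` that glues the cosine branch to
the linear branch with matching value and slope `1` at `r = ε`. A radial function is
differentiable away from the origin by the chain rule, and at the origin because `g' 0 = 0`
makes `g ‖z‖ - g 0 = o(‖z‖)`. Its derivative in the direction `z` is `g' ‖z‖ * ‖z‖`, which is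
nonnegative since `g' r = sin (π r / (2ε)) ≥ 0` on `[0, ε)` and `g' r = 1` beyond.
-/

open scoped RealInnerProductSpace

open Real

noncomputable def rhoEps (d : ℕ) (ε : ℝ) (z : EuclideanSpace ℝ (Fin d)) : ℝ :=
  if ε ≤ ‖z‖ then ‖z‖ - (1 - 2 / Real.pi) * ε
  else (2 * ε / Real.pi) * (1 - Real.cos (Real.pi * ‖z‖ / (2 * ε)))

theorem HasDerivAt.ite_le {f₁ f₂ : ℝ → ℝ} {a r f₁' f₂' : ℝ} (h₁ : HasDerivAt f₁ f₁' r)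
    (h₂ : HasDerivAt f₂ f₂' r) (hglue : a = r → f₁ a = f₂ a ∧ f₁' = f₂') :
    HasDerivAt (fun x => if a ≤ x then f₁ x else f₂ x) (if a ≤ r then f₁' else f₂') r := by
  rcases lt_trichotomy r a with hr | rfl | hr
  · rw [if_neg hr.not_ge]
    refine h₂.congr_of_eventuallyEq ?_
    filter_upwards [eventually_lt_nhds hr] with x hx
    rw [if_neg hx.not_ge]
  · obtain ⟨hval, hder⟩ := hglue rfl
    rw [if_pos le_rfl]
    have hIci : HasDerivWithinAt (fun x => if r ≤ x then f₁ x else f₂ x) f₁' (Set.Ici r) r :=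
      h₁.hasDerivWithinAt.congr (fun x hx => if_pos hx) (if_pos le_rfl)
    have hIic : HasDerivWithinAt (fun x => if r ≤ x then f₁ x else f₂ x) f₁' (Set.Iic r) r := by
      refine (hder ▸ h₂.hasDerivWithinAt).congr (fun x hx => ?_) (by rw [if_pos le_rfl, hval])
      rcases (Set.mem_Iic.1 hx).eq_or_lt with rfl | hx
      · rw [if_pos le_rfl, hval]
      · rw [if_neg hx.not_ge]
    simpa only [Set.Iic_union_Ici, hasDerivWithinAt_univ] using hIic.union hIci
  · rw [if_pos hr.le]
    refine h₁.congr_of_eventuallyEq ?_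
    filter_upwards [eventually_gt_nhds hr] with x hx
    rw [if_pos hx.le]

section RadialFunction

variable {E : Type*} [NormedAddCommGroup E] {g : ℝ → ℝ}

theorem HasDerivAt.hasFDerivAt_comp_norm_zero [NormedSpace ℝ E] (hg : HasDerivAt g 0 0) :
    HasFDerivAt (fun y : E => g ‖y‖) (0 : E →L[ℝ] ℝ) 0 := by
  rw [hasDerivAt_iff_isLittleO_nhds_zero] at hg
  rw [hasFDerivAt_iff_isLittleO_nhds_zero, ← Asymptotics.isLittleO_norm_right]
  simp only [zero_add, smul_zero, sub_zero, norm_zero, zero_apply] at hg ⊢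
  exact hg.comp_tendsto tendsto_norm_zero

variable [InnerProductSpace ℝ E] {x : E} {g' : ℝ}

theorem HasDerivAt.differentiableAt_comp_norm (hg : HasDerivAt g g' ‖x‖)
    (h0 : x = 0 → g' = 0) : DifferentiableAt ℝ (fun y : E => g ‖y‖) x := by
  rcases eq_or_ne x 0 with rfl | hx
  · rw [norm_zero, h0 rfl] at hg
    exact hg.hasFDerivAt_comp_norm_zero.differentiableAt
  · exact hg.differentiableAt.comp x ((contDiffAt_norm ℝ hx).differentiableAt one_ne_zero)

theorem HasDerivAt.fderiv_comp_norm_apply_self (hg : HasDerivAt g g' ‖x‖) :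
    fderiv ℝ (fun y : E => g ‖y‖) x x = g' * ‖x‖ := by
  rcases eq_or_ne x 0 with rfl | hx
  · simp
  · have hN : DifferentiableAt ℝ norm x := (contDiffAt_norm ℝ hx).differentiableAt one_ne_zero
    have hfd : HasFDerivAt (fun y : E => g ‖y‖) (g' • fderiv ℝ norm x) x :=
      hg.comp_hasFDerivAt x hN.hasFDerivAt
    rw [hfd.fderiv, smul_apply, hN.fderiv_norm_self, smul_eq_mul]

end RadialFunction

section Profile

variable {ε : ℝ}

noncomputable def rhoProfile (ε r : ℝ) : ℝ :=
  if ε ≤ r then r - (1 - 2 / π) * ε else (2 * ε / π) * (1 - cos (π * r / (2 * ε)))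

noncomputable def rhoProfileDeriv (ε r : ℝ) : ℝ :=
  if ε ≤ r then 1 else sin (π * r / (2 * ε))

theorem rhoEps_eq_rhoProfile_norm (d : ℕ) (ε : ℝ) :
    rhoEps d ε = fun z => rhoProfile ε ‖z‖ :=
  rfl

theorem hasDerivAt_rhoProfile_cos_branch (hε : ε ≠ 0) (r : ℝ) :
    HasDerivAt (fun r => (2 * ε / π) * (1 - cos (π * r / (2 * ε)))) (sin (π * r / (2 * ε))) r := by
  have hθ : HasDerivAt (fun r : ℝ => π * r / (2 * ε)) (π / (2 * ε)) r := by
    simpa using ((hasDerivAt_id r).const_mul π).div_const (2 * ε)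
  refine (((hθ.cos).const_sub 1).const_mul (2 * ε / π)).congr_deriv ?_
  field_simp [pi_ne_zero]

theorem hasDerivAt_rhoProfile (hε : ε ≠ 0) (r : ℝ) :
    HasDerivAt (rhoProfile ε) (rhoProfileDeriv ε r) r := by
  have hθ : π * ε / (2 * ε) = π / 2 := by field_simp
  refine ((hasDerivAt_id r).sub_const _).ite_le (hasDerivAt_rhoProfile_cos_branch hε r) ?_
  rintro rfl
  refine ⟨?_, by rw [hθ, sin_pi_div_two]⟩
  rw [hθ, cos_pi_div_two, id]
  field_simp [pi_ne_zero]
  ring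

theorem rhoProfileDeriv_zero (hε : 0 < ε) : rhoProfileDeriv ε 0 = 0 := by
  simp [rhoProfileDeriv, hε.not_ge]

theorem rhoProfileDeriv_nonneg (hε : 0 < ε) {r : ℝ} (hr : 0 ≤ r) : 0 ≤ rhoProfileDeriv ε r := by
  unfold rhoProfileDeriv
  split_ifs with h
  · exact zero_le_one
  · apply sin_nonneg_of_nonneg_of_le_pi (by positivity)
    rw [div_le_iff₀ (by positivity)]
    nlinarith [pi_pos, not_le.1 h]

end Profile

theorem rhoEps_grad_inner_nonneg_general (d : ℕ) (ε : ℝ) (hε : 0 < ε)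
    (z : EuclideanSpace ℝ (Fin d)) :
    DifferentiableAt ℝ (rhoEps d ε) z ∧ 0 ≤ ⟪gradient (rhoEps d ε) z, z⟫ := by
  have hg := hasDerivAt_rhoProfile hε.ne' ‖z‖
  rw [rhoEps_eq_rhoProfile_norm]
  refine ⟨hg.differentiableAt_comp_norm fun hz => ?_, ?_⟩
  · rw [hz, norm_zero, rhoProfileDeriv_zero hε]
  · rw [inner_gradient_left, hg.fderiv_comp_norm_apply_self]
    exact mul_nonneg (rhoProfileDeriv_nonneg hε (norm_nonneg z)) (norm_nonneg z)

/-- `ρ_ε` is differentiable everywhere and its gradient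
`α_ε(z) = ∇ρ_ε(z)` satisfies `⟨α_ε(z), z⟩ ≥ 0` for every `z`. -/
theorem rhoEps_grad_inner_nonneg (d : ℕ) (hd : 1 ≤ d) (ε : ℝ) (hε : 0 < ε)
    (z : EuclideanSpace ℝ (Fin d)) :
    DifferentiableAt ℝ (rhoEps d ε) z ∧ 0 ≤ ⟪gradient (rhoEps d ε) z, z⟫ :=
  rhoEps_grad_inner_nonneg_general d ε hε z
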